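/- arXiv:1204.0222 — 2 statements merged into one kernel-verified Lean document; each statement's English description precedes it below -/
import Mathlib

section
/- Let ℓ be an odd prime, n ≥ 1, and let T : G × G → ℤ/ℓⁿℤ be a ℤ-bilinear pairing on a finite abelian group G killed by ℓⁿ. Let D₁, D₂ ∈ G and let r ≥ 1 be such that T(D₁,D₂)+T(D₂,D₁) has order exactly ℓʳ in ℤ/ℓⁿℤ. Then there exists a nonzero element D in the subgroup generated by D₁ and D₂ such that T(D,D) has order at least ℓʳ in ℤ/ℓⁿℤ. -/
lemma zmod_order_aux (ℓ n r : ℕ) (hℓ : ℓ.Prime) (hn : 1 ≤ n) (hr : 1 ≤ r)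
    (x : ZMod (ℓ ^ n)) (hx : (ℓ ^ (r - 1)) • x ≠ 0) :
    ℓ ^ r ≤ addOrderOf x := by
  have hne : NeZero (ℓ ^ n) := ⟨pow_ne_zero _ hℓ.ne_zero⟩
  have hdvd : addOrderOf x ∣ ℓ ^ n := by
    have := addOrderOf_dvd_card (x := x)
    rwa [ZMod.card] at this
  obtain ⟨m, hm, hmx⟩ := (Nat.dvd_prime_pow hℓ).mp hdvd
  by_contra hlt
  push_neg at hlt
  rw [hmx] at hlt
  have hmr : m ≤ r - 1 := by
    by_contra h
    push_neg at h
    exact absurd (Nat.pow_le_pow_right hℓ.one_lt.le (Nat.le_of_pred_lt h)) (not_le.mpr hlt)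
  apply hx
  apply addOrderOf_dvd_iff_nsmul_eq_zero.mp
  rw [hmx]
  exact pow_dvd_pow _ hmr

/-- key step of the antisymmetry lemma. -/
theorem exists_self_pairing_of_order (ℓ n : ℕ) (hℓ : ℓ.Prime) (hodd : Odd ℓ)
    (hn : 1 ≤ n)
    (G : Type*) [AddCommGroup G] (hkill : ∀ g : G, (ℓ ^ n) • g = 0)
    (T : G →+ G →+ ZMod (ℓ ^ n))
    (D₁ D₂ : G) (r : ℕ) (hr : 1 ≤ r)
    (horder : addOrderOf (T D₁ D₂ + T D₂ D₁) = ℓ ^ r) :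
    ∃ D ∈ AddSubgroup.closure ({D₁, D₂} : Set G), D ≠ 0 ∧
      ℓ ^ r ≤ addOrderOf (T D D) := by
  have h1lt : 1 < ℓ ^ r := Nat.one_lt_pow (by omega) hℓ.one_lt
  -- nonzeroness follows from the order bound
  have hnz : ∀ D : G, ℓ ^ r ≤ addOrderOf (T D D) → D ≠ 0 := by
    intro D hD hD0
    rw [hD0] at hD
    simp [map_zero] at hD
    omega
  have hmem₁ : D₁ ∈ AddSubgroup.closure ({D₁, D₂} : Set G) :=
    AddSubgroup.subset_closure (by simp)
  have hmem₂ : D₂ ∈ AddSubgroup.closure ({D₁, D₂} : Set G) :=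
    AddSubgroup.subset_closure (by simp)
  by_cases h11 : ℓ ^ r ≤ addOrderOf (T D₁ D₁)
  · exact ⟨D₁, hmem₁, hnz _ h11, h11⟩
  by_cases h22 : ℓ ^ r ≤ addOrderOf (T D₂ D₂)
  · exact ⟨D₂, hmem₂, hnz _ h22, h22⟩
  -- otherwise D₁ + D₂ works
  have k11 : (ℓ ^ (r - 1)) • T D₁ D₁ = 0 := by
    by_contra h; exact h11 (zmod_order_aux ℓ n r hℓ hn hr _ h)
  have k22 : (ℓ ^ (r - 1)) • T D₂ D₂ = 0 := by
    by_contra h; exact h22 (zmod_order_aux ℓ n r hℓ hn hr _ h)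
  have kS : (ℓ ^ (r - 1)) • (T D₁ D₂ + T D₂ D₁) ≠ 0 := by
    intro h
    have := addOrderOf_dvd_iff_nsmul_eq_zero.mpr h
    rw [horder] at this
    have := Nat.le_of_dvd (Nat.pow_pos hℓ.pos) this
    have h2 : ℓ ^ (r - 1) < ℓ ^ r := Nat.pow_lt_pow_right hℓ.one_lt (by omega)
    omega
  have key : (ℓ ^ (r - 1)) • T (D₁ + D₂) (D₁ + D₂) ≠ 0 := by
    simp only [map_add, AddMonoidHom.add_apply, smul_add]
    rw [k11, k22]
    intro h
    apply kS
    rw [smul_add]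
    linear_combination (norm := abel) h
  have hbound := zmod_order_aux ℓ n r hℓ hn hr _ key
  exact ⟨D₁ + D₂, AddSubgroup.add_mem _ hmem₁ hmem₂, hnz _ hbound, hbound⟩
end

section
/- Let ℓ be a prime, n ≥ 1, and let M be a 4×4 matrix over ℤ/ℓⁿℤ representing an endomorphism of (ℤ/ℓⁿℤ)⁴ preserving a perfect alternating bilinear form ⟨·,·⟩ up to a scalar q (i.e., ⟨Mx, My⟩ = q·⟨x,y⟩ for all x, y), with respect to a symplectic basis Q₁, Q₂, Q₋₁, Q₋₂. If all off-diagonal entries of M are divisible by ℓᵐ with 2m ≥ n, then the diagonal entries satisfy a_{i,i}·a_{-i,-i} ≡ q mod ℓⁿ for i ∈ {1,2}. -/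
/-- diagonal of a symplectic similitude with highly divisible
off-diagonal entries. -/
theorem similitude_diagonal (ℓ n m : ℕ) (hℓ : ℓ.Prime) (hn : 1 ≤ n) (h2m : n ≤ 2 * m)
    (M : Matrix (Fin 4) (Fin 4) (ZMod (ℓ ^ n))) (q : ZMod (ℓ ^ n)) (hq : IsUnit q)
    (J : Matrix (Fin 4) (Fin 4) (ZMod (ℓ ^ n)))
    (hJ : J = !![0, 0, 1, 0; 0, 0, 0, 1; -1, 0, 0, 0; 0, -1, 0, 0])
    (hsim : M.transpose * J * M = q • J)
    (hoff : ∀ i j, i ≠ j → ((ℓ : ZMod (ℓ ^ n))) ^ m ∣ M i j) :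
    M 0 0 * M 2 2 = q ∧ M 1 1 * M 3 3 = q := by
  have hzero : ((ℓ : ZMod (ℓ ^ n))) ^ m * ((ℓ : ZMod (ℓ ^ n))) ^ m = 0 := by
    have hln : ((ℓ : ZMod (ℓ ^ n))) ^ n = 0 := by
      have : ((ℓ ^ n : ℕ) : ZMod (ℓ ^ n)) = 0 := ZMod.natCast_self _
      push_cast at this
      exact this
    calc ((ℓ : ZMod (ℓ ^ n))) ^ m * ((ℓ : ZMod (ℓ ^ n))) ^ m
        = ((ℓ : ZMod (ℓ ^ n))) ^ (2 * m) := by ring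
      _ = ((ℓ : ZMod (ℓ ^ n))) ^ n * ((ℓ : ZMod (ℓ ^ n))) ^ (2 * m - n) := by
          rw [← pow_add]; congr 1; omega
      _ = 0 := by rw [hln, zero_mul]
  have hprod : ∀ i j k l : Fin 4, i ≠ j → k ≠ l → M i j * M k l = 0 := by
    intro i j k l hij hkl
    obtain ⟨a, ha⟩ := hoff i j hij
    obtain ⟨b, hb⟩ := hoff k l hkl
    rw [ha, hb]
    calc (ℓ : ZMod (ℓ ^ n)) ^ m * a * ((ℓ : ZMod (ℓ ^ n)) ^ m * b)
        = ((ℓ : ZMod (ℓ ^ n)) ^ m * (ℓ : ZMod (ℓ ^ n)) ^ m) * (a * b) := by ring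
      _ = 0 := by rw [hzero, zero_mul]
  subst hJ
  have h02 := congrFun (congrFun hsim 0) 2
  have h13 := congrFun (congrFun hsim 1) 3
  simp [Matrix.mul_apply, Matrix.transpose_apply, Fin.sum_univ_four, Matrix.smul_apply] at h02 h13
  refine ⟨?_, ?_⟩
  · linear_combination h02 + hprod 2 0 0 2 (by decide) (by decide) +
      hprod 3 0 1 2 (by decide) (by decide) - hprod 1 0 3 2 (by decide) (by decide)
  · linear_combination h13 + hprod 2 1 0 3 (by decide) (by decide) +
      hprod 3 1 1 3 (by decide) (by decide) - hprod 0 1 2 3 (by decide) (by decide)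
end
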